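/- Let 0 < p < 2 and let N be a positive integer. Then for all N×N complex matrices W = {w_{jk}} and Z = {z_{jk}}, ‖W⋆Z‖_{S_p} ≤ (∑_{j} (max_{k} |w_{jk}|)^{2p/(2−p)})^{(2−p)/(2p)} · (∑_{j,k} |z_{jk}|^2)^{1/2}. -/

import Mathlib

open scoped BigOperators

/-- Schatten `p`-(quasi)norm of a finite square complex matrix:
`(∑ i, s_i(A)^p)^(1/p)` where the `s_i(A)` are the singular values of `A`,
i.e. the square roots of the eigenvalues of `Aᴴ * A`. -/
noncomputable def schattenNorm {ι : Type*} [Fintype ι] [DecidableEq ι] (p : ℝ)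
    (A : Matrix ι ι ℂ) : ℝ :=
  (∑ i, Real.sqrt ((Matrix.isHermitian_conjTranspose_mul_self A).eigenvalues i) ^ p) ^ (1 / p)

/-!
The singular values of `A` are the square roots of the eigenvalues of `A * Aᴴ`, since `Aᴴ * A`
and `A * Aᴴ` have the same characteristic polynomial. The diagonal of a Hermitian matrix is an
average of its eigenvalues with doubly stochastic weights `|U j i|²`, so for the concave map
`x ↦ x ^ (p / 2)` (`p ≤ 2`) we get `‖A‖_{S_p}^p ≤ ∑ j, ‖row j of A‖₂ ^ p`. For `A = W ⋆ Z` the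
`j`-th row norm is at most `(max_k |w_jk|) * ‖row j of Z‖₂`, and Hölder's inequality with
`1 / p = 1 / p_b + 1 / 2` finishes the proof.
-/

open scoped Matrix
open Real

namespace Matrix

variable {n 𝕜 : Type*} [Fintype n] [RCLike 𝕜]

lemma mul_conjTranspose_self_apply_self (A : Matrix n n 𝕜) (j : n) :
    (A * Aᴴ) j j = ((∑ k, ‖A j k‖ ^ 2 : ℝ) : 𝕜) := by
  simp [mul_apply, RCLike.mul_conj]

variable [DecidableEq n]

lemma sum_norm_sq_row_eq_one {U : Matrix n n 𝕜} (hU : U ∈ unitaryGroup n 𝕜) (j : n) :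
    ∑ k, ‖U j k‖ ^ 2 = 1 := by
  have h := congrFun₂ (mem_unitaryGroup_iff.mp hU) j j
  rw [star_eq_conjTranspose, mul_conjTranspose_self_apply_self, one_apply_eq] at h
  exact_mod_cast h

lemma sum_norm_sq_col_eq_one {U : Matrix n n 𝕜} (hU : U ∈ unitaryGroup n 𝕜) (k : n) :
    ∑ j, ‖U j k‖ ^ 2 = 1 := by
  simpa using sum_norm_sq_row_eq_one (Unitary.star_mem hU) k

namespace IsHermitian

variable {A : Matrix n n 𝕜} (hA : A.IsHermitian)

lemma apply_self_eq_sum_eigenvalues (j : n) :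
    A j j =
      ((∑ i, ‖(hA.eigenvectorUnitary : Matrix n n 𝕜) j i‖ ^ 2 * hA.eigenvalues i : ℝ) : 𝕜) := by
  conv_lhs => rw [hA.spectral_theorem, Unitary.conjStarAlgAut_apply]
  simp [mul_apply, diagonal_apply, ← RCLike.mul_conj, RCLike.algebraMap_eq_ofReal, mul_right_comm]

lemma sum_map_eigenvalues_le_sum_map_diag {f : ℝ → ℝ} {s : Set ℝ} (hf : ConcaveOn ℝ s f)
    (hs : ∀ i, hA.eigenvalues i ∈ s) :
    ∑ i, f (hA.eigenvalues i) ≤ ∑ j, f (RCLike.re (A j j)) := by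
  let U : Matrix n n 𝕜 := hA.eigenvectorUnitary
  have hU : U ∈ unitaryGroup n 𝕜 := hA.eigenvectorUnitary.2
  calc ∑ i, f (hA.eigenvalues i) = ∑ j, ∑ i, ‖U j i‖ ^ 2 * f (hA.eigenvalues i) := by
        rw [Finset.sum_comm]
        simp_rw [← Finset.sum_mul, sum_norm_sq_col_eq_one hU, one_mul]
    _ ≤ ∑ j, f (∑ i, ‖U j i‖ ^ 2 * hA.eigenvalues i) := by
        gcongr with j
        exact hf.le_map_sum (fun i _ => sq_nonneg _) (sum_norm_sq_row_eq_one hU j) (fun i _ => hs i)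
    _ = ∑ j, f (RCLike.re (A j j)) := by
        simp only [hA.apply_self_eq_sum_eigenvalues, RCLike.ofReal_re, U]

end IsHermitian

lemma eigenvalues_conjTranspose_mul_self_eq (A : Matrix n n 𝕜) :
    (isHermitian_conjTranspose_mul_self A).eigenvalues =
      (isHermitian_mul_conjTranspose_self A).eigenvalues :=
  (IsHermitian.eigenvalues_eq_eigenvalues_iff _ _).mpr (charpoly_mul_comm _ _)

end Matrix

lemma sqrt_sum_norm_mul_sq_le_iSup_mul {ι R : Type*} [Fintype ι] [NormedRing R] [NormMulClass R]
    (x y : ι → R) :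
    √(∑ k, ‖x k * y k‖ ^ 2) ≤ (⨆ k, ‖x k‖) * √(∑ k, ‖y k‖ ^ 2) := by
  rw [← sqrt_sq (Real.iSup_nonneg fun k => norm_nonneg (x k)), ← sqrt_mul (sq_nonneg _),
    Finset.mul_sum]
  gcongr with k
  rw [norm_mul, mul_pow]
  gcongr
  exact le_ciSup (f := fun k => ‖x k‖) (Set.finite_range _).bddAbove k

lemma schattenNorm_le_rowNorms_of_le_two {ι : Type*} [Fintype ι] [DecidableEq ι] {p : ℝ}
    (hp0 : 0 < p) (hp2 : p ≤ 2) (A : Matrix ι ι ℂ) :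
    schattenNorm p A ≤ (∑ j, √(∑ k, ‖A j k‖ ^ 2) ^ p) ^ (1 / p) := by
  have hf : ConcaveOn ℝ (Set.Ici 0) (fun x : ℝ => √x ^ p) :=
    (concaveOn_rpow (p := p / 2) (by positivity) (by linarith)).congr fun x (hx : 0 ≤ x) => by
      rw [sqrt_eq_rpow, ← rpow_mul hx, one_div_mul_eq_div]
  unfold schattenNorm
  refine rpow_le_rpow (Finset.sum_nonneg fun i _ => by positivity) ?_ (by positivity)
  rw [Matrix.eigenvalues_conjTranspose_mul_self_eq]
  refine ((Matrix.isHermitian_mul_conjTranspose_self A).sum_map_eigenvalues_le_sum_map_diag hf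
    (Matrix.eigenvalues_self_mul_conjTranspose_nonneg A)).trans_eq ?_
  simp only [Matrix.mul_conjTranspose_self_apply_self, RCLike.ofReal_re]

theorem stmt18 (p : ℝ) (hp0 : 0 < p) (hp2 : p < 2) (N : ℕ)
    (W Z : Matrix (Fin N) (Fin N) ℂ) :
    schattenNorm p (Matrix.hadamard W Z) ≤
      (∑ j, (⨆ k, ‖W j k‖) ^ (2 * p / (2 - p))) ^ ((2 - p) / (2 * p)) *
        (∑ j, ∑ k, ‖Z j k‖ ^ 2) ^ ((1 : ℝ) / 2) := by
  have h2p : 0 < 2 - p := by linarith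
  have hpqr : HolderTriple (2 * p / (2 - p)) 2 p :=
    ⟨by field_simp; ring, by positivity, two_pos⟩
  have hd : ∀ j, 0 ≤ ⨆ k, ‖W j k‖ := fun j => Real.iSup_nonneg fun k => norm_nonneg (W j k)
  calc schattenNorm p (Matrix.hadamard W Z)
      ≤ (∑ j, √(∑ k, ‖W j k * Z j k‖ ^ 2) ^ p) ^ (1 / p) :=
        schattenNorm_le_rowNorms_of_le_two hp0 hp2.le _
    _ ≤ (∑ j, ((⨆ k, ‖W j k‖) * √(∑ k, ‖Z j k‖ ^ 2)) ^ p) ^ (1 / p) := by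
        gcongr with j
        exact sqrt_sum_norm_mul_sq_le_iSup_mul (W j) (Z j)
    _ ≤ ((∑ j, (⨆ k, ‖W j k‖) ^ (2 * p / (2 - p))) ^ (p / (2 * p / (2 - p))) *
          (∑ j, √(∑ k, ‖Z j k‖ ^ 2) ^ (2 : ℝ)) ^ (p / 2)) ^ (1 / p) := by
        refine rpow_le_rpow
          (Finset.sum_nonneg fun j _ => rpow_nonneg (mul_nonneg (hd j) (sqrt_nonneg _)) _) ?_
          (by positivity)
        exact Lr_rpow_le_Lp_mul_Lq_of_nonneg Finset.univ hpqr (fun j _ => hd j)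
          (fun j _ => sqrt_nonneg _)
    _ = _ := by
        simp only [rpow_two, sq_sqrt (Finset.sum_nonneg fun k _ => sq_nonneg ‖Z _ k‖)]
        have hX : 0 ≤ ∑ j, (⨆ k, ‖W j k‖) ^ (2 * p / (2 - p)) :=
          Finset.sum_nonneg fun j _ => rpow_nonneg (hd j) _
        have hY : 0 ≤ ∑ j, ∑ k, ‖Z j k‖ ^ 2 := by positivity
        rw [mul_rpow (rpow_nonneg hX _) (rpow_nonneg hY _), ← rpow_mul hX, ← rpow_mul hY]
        congr 2 <;> field_simp
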